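/- arXiv:1305.2906 — 5 statements merged into one kernel-verified Lean document; each statement's English description precedes it below -/
import Mathlib

section
/- Let (C_k)_{k≥0} be the Catalan numbers and let (x_k)_{k≥0} be a sequence of natural numbers satisfying x_0 = 1, x_1 = 2, and x_r = 3x_{r−1} + Σ_{i=2}^{r−1} x_{i−1} C_{r−i} for all r ≥ 2. Then x_r = (r+1)C_r = C(2r, r) for every r ≥ 0, where C(2r,r) is the central binomial coefficient. -/
open Finset

lemma claimA (m : ℕ) :
    2 * ∑ j ∈ Finset.range (m + 1), (j + 1) * catalan j * catalan (m - j)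
      = (m + 2) * catalan (m + 1) := by
  have hrefl := Finset.sum_range_reflect (fun j => (j + 1) * catalan j * catalan (m - j)) (m + 1)
  have h1 : ∑ j ∈ Finset.range (m + 1), (m + 1 - 1 - j + 1) * catalan (m + 1 - 1 - j)
      * catalan (m - (m + 1 - 1 - j))
      = ∑ j ∈ Finset.range (m + 1), (m - j + 1) * catalan (m - j) * catalan j := by
    apply Finset.sum_congr rfl
    intro j hj
    simp only [Finset.mem_range] at hj
    have hj' : j ≤ m := by omega
    have : m + 1 - 1 - j = m - j := by omega
    rw [this, Nat.sub_sub_self hj']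
  rw [h1] at hrefl
  have h2 : 2 * ∑ j ∈ Finset.range (m + 1), (j + 1) * catalan j * catalan (m - j)
      = ∑ j ∈ Finset.range (m + 1),
        ((j + 1) * catalan j * catalan (m - j) + (m - j + 1) * catalan (m - j) * catalan j) := by
    rw [Finset.sum_add_distrib, two_mul, hrefl]
  rw [h2]
  have h3 : ∀ j ∈ Finset.range (m + 1),
      (j + 1) * catalan j * catalan (m - j) + (m - j + 1) * catalan (m - j) * catalan j
        = (m + 2) * (catalan j * catalan (m - j)) := by
    intro j hj
    simp only [Finset.mem_range] at hj
    obtain ⟨k, rfl⟩ : ∃ k, m = j + k := ⟨m - j, by omega⟩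
    rw [Nat.add_sub_cancel_left]
    ring
  rw [Finset.sum_congr rfl h3, ← Finset.mul_sum]
  congr 1
  rw [catalan_succ]
  rw [Fin.sum_univ_eq_sum_range (fun i => catalan i * catalan (m - i))]

lemma claimB (n : ℕ) :
    Nat.centralBinom (n + 1) + 2 * catalan n = 4 * Nat.centralBinom n := by
  apply Nat.eq_of_mul_eq_mul_left (show 0 < n + 1 by omega)
  have h1 := Nat.succ_mul_centralBinom_succ n
  have h2 := succ_mul_catalan_eq_centralBinom n
  nlinarith [h1, h2]

lemma key (n : ℕ) :
    Nat.centralBinom (n + 2) = 3 * Nat.centralBinom (n + 1)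
      + ∑ i ∈ Finset.Icc 2 (n + 1), Nat.centralBinom (i - 1) * catalan (n + 2 - i) := by
  -- T = ∑_{j=1}^{n} cb j * catalan (n+1-j) ; rewrite Icc sum as range sum
  set T : ℕ := ∑ i ∈ Finset.range n, Nat.centralBinom (i + 1) * catalan (n - i) with hT
  have hIcc : ∑ i ∈ Finset.Icc 2 (n + 1), Nat.centralBinom (i - 1) * catalan (n + 2 - i) = T := by
    rw [← Finset.Ico_add_one_right_eq_Icc, Finset.sum_Ico_eq_sum_range]
    have h : n + 1 + 1 - 2 = n := by omega
    rw [h]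
    apply Finset.sum_congr rfl
    intro i hi
    simp only [Finset.mem_range] at hi
    congr 2
    · omega
    · omega
  rw [hIcc]
  -- S = ∑_{j=0}^{n+1} cb j * catalan (n+1-j)
  set S : ℕ := ∑ j ∈ Finset.range (n + 2), (j + 1) * catalan j * catalan (n + 1 - j) with hS
  have hA : 2 * S = (n + 3) * catalan (n + 2) := by
    have := claimA (n + 1)
    simpa using this
  have hA' : 2 * S = Nat.centralBinom (n + 2) := by
    rw [hA]
    exact succ_mul_catalan_eq_centralBinom (n + 2)
  have hB : Nat.centralBinom (n + 2) + 2 * catalan (n + 1) = 4 * Nat.centralBinom (n + 1) := by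
    simpa using claimB (n + 1)
  -- S = catalan (n+1) + T + centralBinom (n+1)
  have hSval : S = catalan (n + 1) + T + Nat.centralBinom (n + 1) := by
    rw [hS, Finset.sum_range_succ']
    simp only [Nat.sub_zero]
    have hlast : ∑ i ∈ Finset.range (n + 1), (i + 1 + 1) * catalan (i + 1) * catalan (n + 1 - (i + 1))
        = T + Nat.centralBinom (n + 1) := by
      rw [Finset.sum_range_succ]
      congr 1
      · rw [hT]
        apply Finset.sum_congr rfl
        intro i hi
        simp only [Finset.mem_range] at hi
        rw [← succ_mul_catalan_eq_centralBinom (i + 1)]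
        congr 2
        omega
      · have : n + 1 - (n + 1) = 0 := by omega
        rw [this, catalan_zero, mul_one, succ_mul_catalan_eq_centralBinom]
    rw [hlast]
    simp [catalan_zero]
    omega
  omega

/-- If `(x_k)` satisfies `x_0 = 1`, `x_1 = 2` and the recursion
`x_r = 3 x_{r-1} + Σ_{i=2}^{r-1} x_{i-1} C_{r-i}` for `r ≥ 2`, where `C_k` is the
`k`-th Catalan number, then `x_r = (r+1) C_r = C(2r, r)` for all `r`. -/
theorem stmt5 (x : ℕ → ℕ) (h0 : x 0 = 1) (h1 : x 1 = 2)
    (hrec : ∀ r, 2 ≤ r →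
      x r = 3 * x (r - 1) + ∑ i ∈ Finset.Icc 2 (r - 1), x (i - 1) * catalan (r - i)) :
    ∀ r, x r = (r + 1) * catalan r ∧ x r = Nat.choose (2 * r) r := by
  have main : ∀ r, x r = Nat.centralBinom r := by
    intro r
    induction r using Nat.strong_induction_on with
    | _ r ih =>
      match r with
      | 0 => simpa [h0] using (Nat.centralBinom_zero).symm
      | 1 => simpa [h1] using (show Nat.centralBinom 1 = 2 from rfl).symm
      | (n + 2) =>
        rw [hrec (n + 2) (by omega)]
        have hsum : ∑ i ∈ Finset.Icc 2 (n + 2 - 1), x (i - 1) * catalan (n + 2 - i)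
            = ∑ i ∈ Finset.Icc 2 (n + 1), Nat.centralBinom (i - 1) * catalan (n + 2 - i) := by
          apply Finset.sum_congr rfl
          intro i hi
          simp only [Finset.mem_Icc] at hi
          rw [ih (i - 1) (by omega)]
        have hx1 : x (n + 2 - 1) = Nat.centralBinom (n + 1) := ih (n + 1) (by omega)
        rw [hsum, hx1, ← key n]
  intro r
  constructor
  · rw [main r, ← succ_mul_catalan_eq_centralBinom]
  · rw [main r]; rfl
end

section
/- Let (C_k)_{k≥0} be the Catalan numbers and let (x_k)_{k≥0} be a sequence of natural numbers satisfying x_0 = 1 and x_r = 3x_{r−1} + Σ_{i=1}^{r−1} x_{i−1} C_{r−i} for all r ≥ 1. Then 2x_r = (r+2)C_{r+1} = C(2r+2, r+1) for every r ≥ 0, where C(a,b) is the binomial coefficient. -/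
open Finset

/-- `(n+2) C_{n+1} = (4n+2) C_n`. -/
lemma lemA (n : ℕ) : (n + 2) * catalan (n + 1) = (4 * n + 2) * catalan n := by
  have h1 := Nat.succ_mul_centralBinom_succ n
  have h2 := succ_mul_catalan_eq_centralBinom n
  have h3 := succ_mul_catalan_eq_centralBinom (n + 1)
  have key : (n + 1) * ((n + 2) * catalan (n + 1)) = (n + 1) * ((4 * n + 2) * catalan n) := by
    calc (n + 1) * ((n + 2) * catalan (n + 1)) = (n + 1) * ((n + 1 + 1) * catalan (n + 1)) := by
          ring
      _ = (n + 1) * (n + 1).centralBinom := by rw [h3]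
      _ = 2 * (2 * n + 1) * n.centralBinom := h1
      _ = 2 * (2 * n + 1) * ((n + 1) * catalan n) := by rw [h2]
      _ = (n + 1) * ((4 * n + 2) * catalan n) := by ring
  exact Nat.eq_of_mul_eq_mul_left (Nat.succ_pos n) key

/-- Segner recursion restricted to the interior of the range. -/
lemma lemC (s : ℕ) :
    catalan (s + 2) = (∑ i ∈ Finset.Icc 1 s, catalan i * catalan (s + 1 - i)) +
      2 * catalan (s + 1) := by
  have h : catalan (s + 2) = ∑ i ∈ range (s + 2), catalan i * catalan (s + 1 - i) := by
    rw [catalan_succ (s + 1)]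
    exact Fin.sum_univ_eq_sum_range (fun i => catalan i * catalan (s + 1 - i)) (s + 2)
  have hr : range (s + 2) = insert 0 (insert (s + 1) (Icc 1 s)) := by
    ext j
    simp only [mem_range, mem_insert, mem_Icc]
    omega
  rw [hr] at h
  rw [Finset.sum_insert (by simp), Finset.sum_insert (by simp)] at h
  simp only [catalan_zero, Nat.sub_self, Nat.sub_zero, one_mul, mul_one] at h
  rw [h]; ring

/-- Reflection identity: `2 Σ_{i=1}^{s} (i+1) C_i C_{s+1-i} = (s+3) Σ_{i=1}^{s} C_i C_{s+1-i}`. -/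
lemma lemB (s : ℕ) :
    2 * (∑ i ∈ Finset.Icc 1 s, (i + 1) * catalan i * catalan (s + 1 - i)) =
      (s + 3) * ∑ i ∈ Finset.Icc 1 s, catalan i * catalan (s + 1 - i) := by
  have hIcc : ∀ f : ℕ → ℕ, ∑ i ∈ Finset.Icc 1 s, f i = ∑ j ∈ range s, f (j + 1) := by
    intro f
    rw [← Finset.Ico_add_one_right_eq_Icc, Finset.sum_Ico_eq_sum_range]
    simp [add_comm]
  have hrefl : ∑ i ∈ Finset.Icc 1 s, (i + 1) * catalan i * catalan (s + 1 - i) =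
      ∑ i ∈ Finset.Icc 1 s, (s + 2 - i) * catalan (s + 1 - i) * catalan i := by
    rw [hIcc, hIcc]
    rw [← Finset.sum_range_reflect]
    apply Finset.sum_congr rfl
    intro j hj
    simp only [mem_range] at hj
    have h1 : s - 1 - j + 1 = s - j := by omega
    rw [h1]
    have h2 : s + 1 - (s - j) = j + 1 := by omega
    have h3 : s + 2 - (j + 1) = s - j + 1 := by omega
    have h4 : s + 1 - (j + 1) = s - j := by omega
    rw [h2, h3, h4]
  have key : 2 * (∑ i ∈ Finset.Icc 1 s, (i + 1) * catalan i * catalan (s + 1 - i)) =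
      ∑ i ∈ Finset.Icc 1 s,
        ((i + 1) * catalan i * catalan (s + 1 - i) +
          (s + 2 - i) * catalan (s + 1 - i) * catalan i) := by
    rw [Finset.sum_add_distrib, ← hrefl]; ring
  rw [key, Finset.mul_sum]
  apply Finset.sum_congr rfl
  intro i hi
  simp only [mem_Icc] at hi
  have h : s + 3 = s + 2 - i + (i + 1) := by omega
  rw [h]
  ring

/-- If `(x_k)` satisfies `x_0 = 1` and the recursion
`x_r = 3 x_{r-1} + Σ_{i=1}^{r-1} x_{i-1} C_{r-i}` for `r ≥ 1`, where `C_k` is the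
`k`-th Catalan number, then `2 x_r = (r+2) C_{r+1} = C(2r+2, r+1)` for all `r`. -/
theorem stmt6 (x : ℕ → ℕ) (h0 : x 0 = 1)
    (hrec : ∀ r, 1 ≤ r →
      x r = 3 * x (r - 1) + ∑ i ∈ Finset.Icc 1 (r - 1), x (i - 1) * catalan (r - i)) :
    ∀ r, 2 * x r = (r + 2) * catalan (r + 1) ∧ 2 * x r = Nat.choose (2 * r + 2) (r + 1) := by
  have main : ∀ r, 2 * x r = (r + 2) * catalan (r + 1) := by
    intro r
    induction r using Nat.strong_induction_on with
    | _ r ih =>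
      match r with
      | 0 => simp [h0, catalan_one]
      | Nat.succ s =>
        show 2 * x (s + 1) = (s + 1 + 2) * catalan (s + 1 + 1)
        have hx := hrec (s + 1) (by omega)
        simp only [Nat.add_sub_cancel] at hx
        -- rewrite the sum using the induction hypothesis (multiplied by 2)
        have hsum : 2 * (∑ i ∈ Finset.Icc 1 s, x (i - 1) * catalan (s + 1 - i)) =
            ∑ i ∈ Finset.Icc 1 s, (i + 1) * catalan i * catalan (s + 1 - i) := by
          rw [Finset.mul_sum]
          apply Finset.sum_congr rfl
          intro i hi
          simp only [mem_Icc] at hi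
          have hih := ih (i - 1) (by omega)
          have h1 : i - 1 + 2 = i + 1 := by omega
          have h2 : i - 1 + 1 = i := by omega
          rw [h1, h2] at hih
          rw [← mul_assoc, hih]
        have hxs : 2 * x s = (s + 2) * catalan (s + 1) := ih s (by omega)
        have key : 2 * (2 * x (s + 1)) = 2 * ((s + 1 + 2) * catalan (s + 1 + 1)) := by
          have e1 : 2 * (2 * x (s + 1)) =
              6 * (2 * x s) + 2 * (2 * (∑ i ∈ Finset.Icc 1 s,
                x (i - 1) * catalan (s + 1 - i))) := by rw [hx]; ring
          rw [e1, hsum, hxs, lemB s]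
          set S := ∑ i ∈ Finset.Icc 1 s, catalan i * catalan (s + 1 - i) with hS
          have hC' : catalan (s + 2) = S + 2 * catalan (s + 1) := lemC s
          have hA' : (s + 3) * catalan (s + 2) = (4 * s + 6) * catalan (s + 1) := by
            have := lemA (s + 1); linarith
          have hmul : (s + 3) * catalan (s + 2) =
              (s + 3) * S + (2 * s + 6) * catalan (s + 1) := by rw [hC']; ring
          linarith [hmul, hA']
        omega
  intro r
  refine ⟨main r, ?_⟩
  rw [main r]
  have h1 := succ_mul_catalan_eq_centralBinom (r + 1)
  have h2 : (r + 1).centralBinom = Nat.choose (2 * r + 2) (r + 1) := by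
    rw [Nat.centralBinom_eq_two_mul_choose, show 2 * (r + 1) = 2 * r + 2 by ring]
  calc (r + 2) * catalan (r + 1) = (r + 1 + 1) * catalan (r + 1) := by ring
    _ = (r + 1).centralBinom := h1
    _ = Nat.choose (2 * r + 2) (r + 1) := h2
end

section
/- Let λ, μ ∈ ℤ^n_{++} with #λ = #μ = r and z̄(λ) = z̄(μ), and suppose that for every vertex i ≥ 1 the diagram D_λ carries the symbol < at i if and only if D_μ does, and carries > at i if and only if D_μ does. Let λ_red, μ_red ∈ ℤ^{2r+z̄(λ)}_{++} be the integral dominant weights whose weight diagrams are obtained from D_λ and D_μ respectively by deleting all vertices carrying < or > and relabelling the remaining vertices in order as 0,1,2,…. Then for every θ ∈ {0,1}^r one has λ = R_θ(μ) if and only if λ_red = R_θ(μ_red); consequently a_{λμ} = a_{λ_red, μ_red}. -/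
/-!
Deleting the vertices that carry `<` or `>` and relabelling the remaining ones in order
(`keepMap`, an order isomorphism from the kept vertices onto `ℕ`) preserves which vertices carry
`×` or are empty, hence the positions `x_i`, the distances `d(s, t)` and the lengths `ℓ(i, t)`
between kept vertices, and the number of zero entries. So `R_i(μ)` moves the `i`-th `×` to `t`
exactly when `R_i(μ_red)` moves it to `keepMap t`. The entries at `<` and `>` vertices are
the same for `λ` and `μ` and cancel from the multiset identity defining `λ = R_θ(μ)`; the rest
lives on kept vertices, where the relabelling is injective, so the identity survives the
reduction in both directions. As `z(λ_red) = z(λ)` and `z(μ_red) = z(μ)`, the coefficients agree.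
-/

open scoped Classical

noncomputable section

/-- An integral dominant weight in `ℤⁿ₊₊`: weakly decreasing entries, and any
repeated entry must be zero. -/
structure DomWeight (n : ℕ) where
  coeff : Fin n → ℤ
  antitone' : ∀ i j : Fin n, i ≤ j → coeff j ≤ coeff i
  regular' : ∀ i j : Fin n, i ≠ j → coeff i = coeff j → coeff i = 0

namespace DomWeight

variable {n : ℕ}

/-- The multiset of entries of a weight. -/
def entries (l : DomWeight n) : Multiset ℤ :=
  Multiset.map l.coeff Finset.univ.val

/-- `k` occurs as an entry of `l`. -/
def IsEntry (l : DomWeight n) (k : ℤ) : Prop := ∃ i, l.coeff i = k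

/-- `z(λ)`: the number of zero entries. -/
def zNum (l : DomWeight n) : ℕ := (Finset.univ.filter fun i => l.coeff i = 0).card

/-- `z̄(λ)`: the parity of `z(λ)`. -/
def barz (l : DomWeight n) : ℕ := l.zNum % 2

/-- The number `⌊z(λ)/2⌋` of `×`'s at vertex `0` of the weight diagram. -/
def numX0 (l : DomWeight n) : ℕ := l.zNum / 2

/-- Vertex `v ≥ 1` of the weight diagram carries the symbol `×`. -/
def HasX (l : DomWeight n) (v : ℕ) : Prop :=
  0 < v ∧ l.IsEntry (v : ℤ) ∧ l.IsEntry (-(v : ℤ))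

/-- Vertex `v ≥ 1` of the weight diagram carries the symbol `>`. -/
def HasGt (l : DomWeight n) (v : ℕ) : Prop :=
  0 < v ∧ l.IsEntry (v : ℤ) ∧ ¬ l.IsEntry (-(v : ℤ))

/-- Vertex `v ≥ 1` of the weight diagram carries the symbol `<`. -/
def HasLt (l : DomWeight n) (v : ℕ) : Prop :=
  0 < v ∧ ¬ l.IsEntry (v : ℤ) ∧ l.IsEntry (-(v : ℤ))

/-- Vertex `v ≥ 1` of the weight diagram is empty. -/
def EmptyAt (l : DomWeight n) (v : ℕ) : Prop :=
  0 < v ∧ ¬ l.IsEntry (v : ℤ) ∧ ¬ l.IsEntry (-(v : ℤ))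

/-- The finite set of positive vertices carrying a `×`. -/
def posXs (l : DomWeight n) : Finset ℕ :=
  (Finset.univ.image fun i => (l.coeff i).toNat).filter fun v => l.HasX v

/-- `#λ`, the degree of atypicality: the total number of `×`'s in the diagram. -/
def atyp (l : DomWeight n) : ℕ := l.numX0 + l.posXs.card

/-- The vertex `x_i` at which the `i`-th `×` (numbered `1,…,r` from bottom to top
at vertex `0`, then from left to right) sits. -/
def xVertex (l : DomWeight n) (i : ℕ) : ℕ :=
  if i ≤ l.numX0 then 0 else (l.posXs.sort (· ≤ ·)).getD (i - l.numX0 - 1) 0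

/-- The distance `d_λ(s,t)`: the number of empty vertices minus the number of `×`'s
strictly between `s` and `t`. -/
def dist (l : DomWeight n) (s t : ℕ) : ℤ :=
  (((Finset.Ioo s t).filter fun v => l.EmptyAt v).card : ℤ)
    - (((Finset.Ioo s t).filter fun v => l.HasX v).card : ℤ)

/-- The length `ℓ_λ(i,t)` from the `i`-th `×` to the vertex `t`. -/
def len (l : DomWeight n) (i t : ℕ) : ℤ :=
  if 0 < l.xVertex i then l.dist (l.xVertex i) t
  else l.dist 0 t - 2 * ((l.numX0 : ℤ) - (i : ℤ)) - (l.barz : ℤ)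

/-- `t` is the destination of the right move `R_i(λ)`: the first empty vertex
`t > x_i` with `ℓ_λ(i,t) = 0` and `ℓ_λ(i,s) < 0` for all empty `s` in between. -/
def IsRightMoveDest (l : DomWeight n) (i t : ℕ) : Prop :=
  l.EmptyAt t ∧ l.xVertex i < t ∧ l.len i t = 0 ∧
    ∀ s, l.xVertex i < s → s < t → l.EmptyAt s → l.len i s < 0

end DomWeight

/-- The set of indices `i ∈ {1,…,r}` selected by `θ ∈ {0,1}^r`. -/
def selected (r : ℕ) (θ : ℕ → Bool) : Finset ℕ :=
  (Finset.Icc 1 r).filter fun i => θ i = true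

namespace DomWeight

variable {n : ℕ}

/-- `l = R_θ(m)`: the weight diagram of `l` is obtained from that of `m` by
performing, independently in `D_m`, the right moves `R_i(m)` for all selected `i`. -/
def IsRightPathRes (m : DomWeight n) (θ : ℕ → Bool) (l : DomWeight n) : Prop :=
  ∃ dest : ℕ → ℕ,
    (∀ i ∈ selected m.atyp θ, m.IsRightMoveDest i (dest i)) ∧
    l.entries + ∑ i ∈ selected m.atyp θ,
        ({(m.xVertex i : ℤ), -(m.xVertex i : ℤ)} : Multiset ℤ)
      = m.entries + ∑ i ∈ selected m.atyp θ,
        ({(dest i : ℤ), -(dest i : ℤ)} : Multiset ℤ)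

/-- The matrix coefficient `a_{λμ} = [E(μ) : L(λ)]`. -/
def aCoeff (l m : DomWeight n) : ℚ :=
  if ∃ θ : ℕ → Bool, m.IsRightPathRes θ l then
    (2 : ℚ) ^ (((m.zNum : ℤ) - (l.zNum : ℤ)) / 2) else 0

/-- A single raising move of the `i`-th `×`, as a relation on dominant weights. -/
def RMoveRel (i : ℕ) (m l : DomWeight n) : Prop :=
  ∃ t, m.IsRightMoveDest i t ∧
    l.entries + ({(m.xVertex i : ℤ), -(m.xVertex i : ℤ)} : Multiset ℤ)
      = m.entries + ({(t : ℤ), -(t : ℤ)} : Multiset ℤ)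

/-- `k`-fold iterate of the raising move of the `i`-th `×`. -/
def RMoveIter (i : ℕ) : ℕ → DomWeight n → DomWeight n → Prop
  | 0, m, l => m = l
  | k + 1, m, l => ∃ ν, RMoveRel i m ν ∧ RMoveIter i k ν l

/-- Composition of iterated raising moves along a list of indices. -/
def RChainAux (θ : ℕ → ℕ) : List ℕ → DomWeight n → DomWeight n → Prop
  | [], m, l => m = l
  | i :: rest, m, l => ∃ ν, RMoveIter i (θ i) m ν ∧ RChainAux θ rest ν l

/-- `l = R'_θ(m) = R_1^{θ_1} R_2^{θ_2} ⋯ R_r^{θ_r}(m)` where `r = #m`. -/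
def IsRPrimeRes (m : DomWeight n) (θ : ℕ → ℕ) (l : DomWeight n) : Prop :=
  RChainAux θ ((List.range' 1 m.atyp).reverse) m l

/-- The set of `θ ∈ ℕ^r` (supported on `{1,…,r}`, `r = #m`) with `R'_θ(m) = l`. -/
def bTheta (m l : DomWeight n) : Set (ℕ → ℕ) :=
  {θ | (∀ i, i ∉ Finset.Icc 1 m.atyp → θ i = 0) ∧ m.IsRPrimeRes θ l}

/-- The matrix coefficient `b_{λμ}`. -/
def bCoeff (l m : DomWeight n) : ℚ :=
  (2 : ℚ) ^ (((m.zNum : ℤ) - (l.zNum : ℤ)) / 2) *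
    ∑ᶠ θ ∈ bTheta m l, (-1 : ℚ) ^ (∑ i ∈ Finset.Icc 1 m.atyp, θ i)

/-- The total order on `ℤⁿ₊₊`: `λ < μ` iff at the first index where they differ,
the entry of `μ` is smaller. -/
def wlt (l m : DomWeight n) : Prop :=
  ∃ p : Fin n, (∀ q : Fin n, q < p → l.coeff q = m.coeff q) ∧ m.coeff p < l.coeff p

end DomWeight


namespace DomWeight
variable {n : ℕ}

/-- The relabelling of kept vertices: `keepMap l v` is the new label of the
vertex `v` after deleting all vertices carrying `<` or `>`. -/
def keepMap (l : DomWeight n) (v : ℕ) : ℕ :=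
  ((Finset.Icc 1 v).filter fun u => ¬ l.HasGt u ∧ ¬ l.HasLt u).card

end DomWeight

def oddExt (f : ℕ → ℕ) (k : ℤ) : ℤ := k.sign * f k.natAbs

lemma oddExt_natCast {f : ℕ → ℕ} (hf : f 0 = 0) (v : ℕ) : oddExt f v = f v := by
  rcases Nat.eq_zero_or_pos v with rfl | hv
  · simp [oddExt, hf]
  · simp [oddExt, Int.sign_natCast_of_ne_zero hv.ne']

lemma oddExt_neg_natCast {f : ℕ → ℕ} (hf : f 0 = 0) (v : ℕ) : oddExt f (-v) = -f v := by
  rcases Nat.eq_zero_or_pos v with rfl | hv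
  · simp [oddExt, hf]
  · simp [oddExt, Int.sign_natCast_of_ne_zero hv.ne']

lemma map_oddExt_pair {f : ℕ → ℕ} (hf : f 0 = 0) (v : ℕ) :
    Multiset.map (oddExt f) {(v : ℤ), -(v : ℤ)} = {(f v : ℤ), -(f v : ℤ)} := by
  simp [oddExt_natCast hf, oddExt_neg_natCast hf]

lemma injOn_oddExt {f : ℕ → ℕ} {S : Set ℕ} (hf : f 0 = 0) (h0 : 0 ∈ S) (hS : S.InjOn f) :
    Set.InjOn (oddExt f) {k | k.natAbs ∈ S} := by
  have hpos : ∀ v ∈ S, v ≠ 0 → f v ≠ 0 := fun v hv hv0 hfv =>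
    hv0 (hS hv h0 (hfv.trans hf.symm))
  intro a ha b hb hab
  obtain ⟨u, rfl | rfl⟩ := Int.eq_nat_or_neg a <;>
    obtain ⟨v, rfl | rfl⟩ := Int.eq_nat_or_neg b <;>
    simp only [Set.mem_ofPred_eq, Int.natAbs_neg, Int.natAbs_natCast] at ha hb <;>
    simp only [oddExt_natCast hf, oddExt_neg_natCast hf, neg_inj, Nat.cast_inj] at hab
  all_goals first
    | rw [hS ha hb hab]
    | have := hpos u ha; have := hpos v hb; omega

lemma Multiset.eq_of_map_eq_of_injOn {α β : Type*} [Nonempty α] {f : α → β} {S : Set α}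
    (hf : S.InjOn f) {s t : Multiset α} (hs : ∀ a ∈ s, a ∈ S) (ht : ∀ a ∈ t, a ∈ S)
    (h : s.map f = t.map f) : s = t := by
  have key : ∀ u : Multiset α, (∀ a ∈ u, a ∈ S) →
      (u.map f).map (Function.invFunOn f S) = u := fun u hu => by
    rw [Multiset.map_map]
    exact (Multiset.map_congr rfl fun a ha => hf.leftInvOn_invFunOn (hu a ha)).trans
      (Multiset.map_id' u)
  rw [← key s hs, ← key t ht, h]

lemma Finset.sort_image_of_strictMonoOn {α β : Type*} [LinearOrder α] [LinearOrder β]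
    [DecidableEq β] {s : Finset α} {f : α → β} (hf : StrictMonoOn f s) :
    (s.image f).sort (· ≤ ·) = (s.sort (· ≤ ·)).map f := by
  rw [Finset.sort, Finset.image_val_of_injOn hf.injOn, Finset.sort]
  exact (Multiset.map_sort f s.val _ _ fun a ha b hb => (hf.le_iff_le ha hb).symm).symm

lemma natAbs_eq_of_mem_sum_pair {ι : Type*} {s : Finset ι} {f : ι → ℕ} {a : ℤ}
    (ha : a ∈ ∑ i ∈ s, ({(f i : ℤ), -(f i : ℤ)} : Multiset ℤ)) :
    ∃ i ∈ s, a.natAbs = f i := by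
  obtain ⟨i, hi, ha⟩ := Multiset.mem_sum.1 ha
  refine ⟨i, hi, ?_⟩
  rcases Multiset.mem_cons.1 ha with rfl | ha
  · simp
  · rw [Multiset.mem_singleton.1 ha]; simp

lemma Multiset.map_finsetSum {ι α β : Type*} (f : α → β) (s : Finset ι)
    (g : ι → Multiset α) :
    (∑ i ∈ s, g i).map f = ∑ i ∈ s, (g i).map f :=
  map_sum (Multiset.mapAddMonoidHom f) g s

lemma count_replicate_add_sum_pair {z : ℕ} {T : Finset ℕ} (hT : ∀ u ∈ T, 0 < u) (k : ℤ) :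
    (Multiset.replicate z (0 : ℤ) + ∑ u ∈ T, ({(u : ℤ), -(u : ℤ)} : Multiset ℤ)).count k =
      if k = 0 then z else if k.natAbs ∈ T then 1 else 0 := by
  have hpair : ∀ u ∈ T, ({(u : ℤ), -(u : ℤ)} : Multiset ℤ).count k =
      if u = k.natAbs then 1 else 0 := by
    intro u hu
    have := hT u hu
    rw [Multiset.insert_eq_cons, Multiset.count_cons, Multiset.count_singleton]
    split_ifs <;> omega
  rw [Multiset.count_add, Multiset.count_replicate, Multiset.count_sum',
    Finset.sum_congr rfl hpair, Finset.sum_ite_eq']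
  rcases eq_or_ne k 0 with rfl | hk
  · simp [show (0 : ℕ) ∉ T from fun h => (hT _ h).false]
  · simp [hk, hk.symm]

namespace DomWeight

section

variable {n : ℕ} (w : DomWeight n)

lemma mem_entries {k : ℤ} : k ∈ w.entries ↔ w.IsEntry k := by
  simp [entries, IsEntry]

lemma count_entries (k : ℤ) :
    w.entries.count k = (Finset.univ.filter fun i => w.coeff i = k).card := by
  rw [entries, Multiset.count_map, Finset.card, Finset.filter_val]
  exact congrArg _ (Multiset.filter_congr fun _ _ => eq_comm)

lemma count_entries_zero : w.entries.count 0 = w.zNum :=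
  w.count_entries 0

lemma count_entries_of_ne_zero {k : ℤ} (hk : k ≠ 0) :
    w.entries.count k = if w.IsEntry k then 1 else 0 := by
  rw [count_entries]
  split_ifs with h
  · obtain ⟨i, hi⟩ := h
    refine Finset.card_eq_one.2
      ⟨i, Finset.eq_singleton_iff_unique_mem.2 ⟨by simpa using hi, ?_⟩⟩
    intro j hj
    rw [Finset.mem_filter] at hj
    by_contra hji
    exact hk (hj.2 ▸ w.regular' j i hji (hj.2.trans hi.symm))
  · exact Finset.card_eq_zero.2 (Finset.filter_eq_empty_iff.2 fun i _ hi => h ⟨i, hi⟩)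

lemma mem_posXs {v : ℕ} : v ∈ w.posXs ↔ w.HasX v := by
  refine ⟨fun h => (Finset.mem_filter.1 h).2, fun h => Finset.mem_filter.2 ⟨?_, h⟩⟩
  obtain ⟨i, hi⟩ := h.2.1
  exact Finset.mem_image.2 ⟨i, Finset.mem_univ i, by simp [hi]⟩

lemma xVertex_eq_zero_or_mem_posXs (i : ℕ) : w.xVertex i = 0 ∨ w.xVertex i ∈ w.posXs := by
  unfold xVertex
  split_ifs
  · exact Or.inl rfl
  · rw [List.getD_eq_getElem?_getD]
    cases h : (w.posXs.sort (· ≤ ·))[i - w.numX0 - 1]? with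
    | none => exact Or.inl rfl
    | some v => exact Or.inr ((Finset.mem_sort _).1 (List.mem_of_getElem? h))

/-- The vertices that survive the reduction (vertex `0` included). -/
def IsKept (v : ℕ) : Prop := ¬ w.HasGt v ∧ ¬ w.HasLt v

variable {w}

lemma isKept_zero : w.IsKept 0 :=
  ⟨fun h => h.1.false, fun h => h.1.false⟩

lemma HasX.isKept {v : ℕ} (h : w.HasX v) : w.IsKept v :=
  ⟨fun hg => hg.2.2 h.2.2, fun hl => hl.2.1 h.2.1⟩

lemma EmptyAt.isKept {v : ℕ} (h : w.EmptyAt v) : w.IsKept v :=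
  ⟨fun hg => h.2.1 hg.2.1, fun hl => h.2.2 hl.2.2⟩

lemma emptyAt_iff_not_hasX {v : ℕ} (hv : 0 < v) (hk : w.IsKept v) :
    w.EmptyAt v ↔ ¬ w.HasX v := by
  unfold EmptyAt HasX
  unfold IsKept HasGt HasLt at hk
  tauto

end

section

variable {n : ℕ}

def keptEntries (w : DomWeight n) : Multiset ℤ :=
  Multiset.replicate w.zNum 0 + ∑ v ∈ w.posXs, ({(v : ℤ), -(v : ℤ)} : Multiset ℤ)

/-- The entries at the vertices carrying `<` or `>`. -/
def arrowEntries (w : DomWeight n) : Multiset ℤ :=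
  w.entries.filter fun k => k ≠ 0 ∧ ¬ w.IsEntry (-k)

lemma count_keptEntries (w : DomWeight n) (k : ℤ) :
    w.keptEntries.count k = if k = 0 then w.zNum else if w.HasX k.natAbs then 1 else 0 := by
  simp only [keptEntries, count_replicate_add_sum_pair (fun u hu => ((w.mem_posXs).1 hu).1),
    mem_posXs]

lemma count_arrowEntries (w : DomWeight n) (k : ℤ) :
    w.arrowEntries.count k = if k ≠ 0 ∧ w.IsEntry k ∧ ¬ w.IsEntry (-k) then 1 else 0 := by
  rw [arrowEntries, Multiset.count_filter]
  by_cases hk : k = 0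
  · simp [hk]
  · rw [count_entries_of_ne_zero w hk]
    split_ifs <;> tauto

lemma entries_eq_keptEntries_add_arrowEntries (w : DomWeight n) :
    w.entries = w.keptEntries + w.arrowEntries := by
  ext k
  rw [Multiset.count_add, count_keptEntries, count_arrowEntries]
  obtain ⟨v, rfl | rfl⟩ := Int.eq_nat_or_neg k <;> rcases Nat.eq_zero_or_pos v with rfl | hv
  all_goals simp only [Nat.cast_zero, neg_zero, count_entries_zero, if_true, ne_eq, not_true,
    false_and, if_false, add_zero]
  all_goals
    rw [count_entries_of_ne_zero w (by omega)]
    simp only [HasX, Int.natAbs_neg, Int.natAbs_natCast, neg_neg, hv, true_and]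
    split_ifs <;> first | rfl | omega | tauto

end

section

variable {n : ℕ}

def SameArrows (l m : DomWeight n) : Prop :=
  ∀ v : ℕ, 1 ≤ v → ((l.HasLt v ↔ m.HasLt v) ∧ (l.HasGt v ↔ m.HasGt v))

lemma count_arrowEntries_natCast (w : DomWeight n) (v : ℕ) :
    w.arrowEntries.count (v : ℤ) = if w.HasGt v then 1 else 0 := by
  rw [count_arrowEntries]
  exact if_congr (by simp [HasGt, Nat.pos_iff_ne_zero]) rfl rfl

lemma count_arrowEntries_neg_natCast (w : DomWeight n) (v : ℕ) :
    w.arrowEntries.count (-(v : ℤ)) = if w.HasLt v then 1 else 0 := by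
  rw [count_arrowEntries]
  exact if_congr (by simp [HasLt, Nat.pos_iff_ne_zero]; tauto) rfl rfl

namespace SameArrows

variable {l m : DomWeight n} (h : l.SameArrows m)
include h

lemma hasGt_iff (v : ℕ) : l.HasGt v ↔ m.HasGt v := by
  rcases Nat.eq_zero_or_pos v with rfl | hv
  · exact iff_of_false (fun h => h.1.false) (fun h => h.1.false)
  · exact (h v hv).2

lemma hasLt_iff (v : ℕ) : l.HasLt v ↔ m.HasLt v := by
  rcases Nat.eq_zero_or_pos v with rfl | hv
  · exact iff_of_false (fun h => h.1.false) (fun h => h.1.false)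
  · exact (h v hv).1

lemma isKept_iff (v : ℕ) : l.IsKept v ↔ m.IsKept v := by
  rw [IsKept, IsKept, h.hasGt_iff, h.hasLt_iff]

lemma keepMap_eq : l.keepMap = m.keepMap := by
  funext v
  exact congrArg Finset.card (Finset.filter_congr fun u _ => by rw [h.hasGt_iff, h.hasLt_iff])

lemma arrowEntries_eq : l.arrowEntries = m.arrowEntries := by
  ext k
  obtain ⟨v, rfl | rfl⟩ := Int.eq_nat_or_neg k
  · rw [count_arrowEntries_natCast, count_arrowEntries_natCast, h.hasGt_iff]
  · rw [count_arrowEntries_neg_natCast, count_arrowEntries_neg_natCast, h.hasLt_iff]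

end SameArrows

end

section PairEntries

variable {N : ℕ} {w : DomWeight N} {z : ℕ} {T : Finset ℕ}
  (hw : w.entries = Multiset.replicate z 0 + ∑ u ∈ T, ({(u : ℤ), -(u : ℤ)} : Multiset ℤ))
  (hT : ∀ u ∈ T, 0 < u)
include hw hT

lemma isEntry_iff_of_entries_eq {k : ℤ} (hk : k ≠ 0) : w.IsEntry k ↔ k.natAbs ∈ T := by
  rw [← mem_entries, ← Multiset.count_pos, hw, count_replicate_add_sum_pair hT, if_neg hk]
  split_ifs with h <;> simp [h]

lemma zNum_eq_of_entries_eq : w.zNum = z := by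
  rw [← count_entries_zero, hw, count_replicate_add_sum_pair hT, if_pos rfl]

lemma hasX_iff_of_entries_eq (v : ℕ) : w.HasX v ↔ v ∈ T := by
  refine ⟨fun h => ?_, fun h => ?_⟩
  · simpa using (isEntry_iff_of_entries_eq hw hT (by simpa using h.1.ne')).1 h.2.1
  · have hv := hT v h
    exact ⟨hv, (isEntry_iff_of_entries_eq hw hT (by omega)).2 (by simpa using h),
      (isEntry_iff_of_entries_eq hw hT (by omega)).2 (by simpa using h)⟩

lemma posXs_eq_of_entries_eq : w.posXs = T := by
  ext v
  rw [mem_posXs, hasX_iff_of_entries_eq hw hT]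

lemma isKept_of_entries_eq (v : ℕ) : w.IsKept v := by
  have hsymm : 0 < v → (w.IsEntry v ↔ w.IsEntry (-v)) := fun hv => by
    rw [isEntry_iff_of_entries_eq hw hT (by omega), isEntry_iff_of_entries_eq hw hT (by omega)]
    simp
  exact ⟨fun h => h.2.2 ((hsymm h.1).1 h.2.1), fun h => h.2.1 ((hsymm h.1).2 h.2.2)⟩

end PairEntries

section

variable {n : ℕ} (w : DomWeight n)

lemma keepMap_add_one (v : ℕ) : w.keepMap v + 1 = Nat.count w.IsKept (v + 1) := by
  have hrange : Finset.range (v + 1) = insert 0 (Finset.Icc 1 v) := by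
    ext u; simp only [Finset.mem_range, Finset.mem_insert, Finset.mem_Icc]; omega
  rw [Nat.count_eq_card_filter_range, hrange, Finset.filter_insert, if_pos isKept_zero,
    Finset.card_insert_of_notMem (by simp)]
  unfold keepMap IsKept
  -- the two filters differ only in their `Decidable` instances
  congr

lemma keepMap_zero : w.keepMap 0 = 0 := rfl

lemma infinite_setOf_isKept : {v | w.IsKept v}.Infinite := by
  have hfin : {v | ¬ w.IsKept v}.Finite := by
    refine (Set.finite_range fun i => (w.coeff i).natAbs).subset fun v hv => ?_
    obtain ⟨i, hi⟩ | ⟨i, hi⟩ : w.IsEntry v ∨ w.IsEntry (-v) := by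
      simp only [Set.mem_ofPred_eq, IsKept, HasGt, HasLt] at hv; tauto
    all_goals exact ⟨i, by simp [hi]⟩
  simpa only [Set.compl_ofPred, not_not] using hfin.infinite_compl

variable {w}

lemma keepMap_eq_count {v : ℕ} (hv : w.IsKept v) : w.keepMap v = Nat.count w.IsKept v := by
  have := w.keepMap_add_one v
  rw [Nat.count_succ, if_pos hv] at this
  omega

lemma keepMap_mono : Monotone w.keepMap := fun a b hab => by
  have := w.keepMap_add_one a; have := w.keepMap_add_one b
  have := Nat.count_monotone w.IsKept (show a + 1 ≤ b + 1 by omega)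
  omega

lemma keepMap_lt_keepMap_iff {a b : ℕ} (hb : w.IsKept b) :
    w.keepMap a < w.keepMap b ↔ a < b := by
  refine ⟨fun h => lt_of_not_ge fun hba => (keepMap_mono hba).not_gt h, fun h => ?_⟩
  have := w.keepMap_add_one a
  have := Nat.count_monotone w.IsKept (show a + 1 ≤ b by omega)
  rw [keepMap_eq_count hb]
  omega

lemma strictMonoOn_keepMap : StrictMonoOn w.keepMap {v | w.IsKept v} := fun _ _ _ hb h =>
  (keepMap_lt_keepMap_iff hb).2 h

lemma keepMap_injOn : Set.InjOn w.keepMap {v | w.IsKept v} :=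
  strictMonoOn_keepMap.injOn

lemma keepMap_pos_iff {v : ℕ} (hv : w.IsKept v) : 0 < w.keepMap v ↔ 0 < v :=
  keepMap_lt_keepMap_iff (a := 0) hv

variable (w)

def keptVertex (u : ℕ) : ℕ := Nat.nth w.IsKept u

lemma isKept_keptVertex (u : ℕ) : w.IsKept (w.keptVertex u) :=
  Nat.nth_mem_of_infinite w.infinite_setOf_isKept u

lemma keepMap_keptVertex (u : ℕ) : w.keepMap (w.keptVertex u) = u := by
  rw [keepMap_eq_count (w.isKept_keptVertex u), keptVertex,
    Nat.count_nth_of_infinite w.infinite_setOf_isKept]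

variable {w}

lemma keptVertex_keepMap {v : ℕ} (hv : w.IsKept v) : w.keptVertex (w.keepMap v) = v := by
  rw [keepMap_eq_count hv, keptVertex, Nat.nth_count hv]

end

section

variable {n N : ℕ}

lemma forall_iff_forall_keepMap (w : DomWeight n) {P : ℕ → Prop} :
    (∀ u, P u) ↔ ∀ v, w.IsKept v → P (w.keepMap v) :=
  ⟨fun h _ _ => h _, fun h u => w.keepMap_keptVertex u ▸ h _ (w.isKept_keptVertex u)⟩

lemma isKept_xVertex (w : DomWeight n) (i : ℕ) : w.IsKept (w.xVertex i) :=
  (w.xVertex_eq_zero_or_mem_posXs i).elim (fun h => h ▸ isKept_zero)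
    fun h => ((mem_posXs w).1 h).isKept

lemma card_filter_Ioo_keepMap {w : DomWeight n} {P Q : ℕ → Prop} (hP : ∀ v, P v → w.IsKept v)
    (hPQ : ∀ v, w.IsKept v → (Q (w.keepMap v) ↔ P v)) {s t : ℕ} (ht : w.IsKept t) :
    ((Finset.Ioo (w.keepMap s) (w.keepMap t)).filter Q).card =
      ((Finset.Ioo s t).filter P).card := by
  refine Finset.card_nbij' w.keptVertex w.keepMap (fun u hu => ?_) (fun v hv => ?_)
    (fun u _ => w.keepMap_keptVertex u) (fun v hv => keptVertex_keepMap (hP v (by simp_all)))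
  · simp only [Finset.coe_filter, Finset.mem_Ioo, Set.mem_ofPred_eq] at hu ⊢
    have hk := w.isKept_keptVertex u
    rw [← w.keepMap_keptVertex u, keepMap_lt_keepMap_iff hk, keepMap_lt_keepMap_iff ht,
      hPQ _ hk] at hu
    exact hu
  · simp only [Finset.coe_filter, Finset.mem_Ioo, Set.mem_ofPred_eq] at hv ⊢
    have hk := hP v hv.2
    rw [keepMap_lt_keepMap_iff hk, keepMap_lt_keepMap_iff ht, hPQ v hk]
    exact hv

lemma pos_of_mem_image_keepMap {w : DomWeight n} {u : ℕ} (hu : u ∈ w.posXs.image w.keepMap) :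
    0 < u := by
  obtain ⟨v, hv, rfl⟩ := Finset.mem_image.1 hu
  have hx := (mem_posXs w).1 hv
  exact (keepMap_pos_iff hx.isKept).2 hx.1

def IsReduction (wred : DomWeight N) (w : DomWeight n) : Prop :=
  wred.entries = Multiset.replicate w.zNum (0 : ℤ) +
    ∑ v ∈ w.posXs, ({(w.keepMap v : ℤ), -(w.keepMap v : ℤ)} : Multiset ℤ)

namespace IsReduction

variable {w : DomWeight n} {wred : DomWeight N} (h : wred.IsReduction w)
include h

lemma entries_eq_pairs : wred.entries = Multiset.replicate w.zNum 0 +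
    ∑ u ∈ w.posXs.image w.keepMap, ({(u : ℤ), -(u : ℤ)} : Multiset ℤ) := by
  rw [h, Finset.sum_image (keepMap_injOn.mono fun v hv => ((mem_posXs w).1 hv).isKept)]

lemma zNum_eq : wred.zNum = w.zNum :=
  zNum_eq_of_entries_eq h.entries_eq_pairs fun _ => pos_of_mem_image_keepMap

lemma posXs_eq : wred.posXs = w.posXs.image w.keepMap :=
  posXs_eq_of_entries_eq h.entries_eq_pairs fun _ => pos_of_mem_image_keepMap

lemma atyp_eq : wred.atyp = w.atyp := by
  rw [atyp, atyp, numX0, numX0, h.zNum_eq, h.posXs_eq,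
    Finset.card_image_of_injOn (keepMap_injOn.mono fun v hv => ((mem_posXs w).1 hv).isKept)]

lemma entries_eq_map : wred.entries = w.keptEntries.map (oddExt w.keepMap) := by
  rw [h, keptEntries, Multiset.map_add, Multiset.map_replicate, Multiset.map_finsetSum]
  simp only [map_oddExt_pair (keepMap_zero w)]
  simp [oddExt]

lemma xVertex_eq (i : ℕ) : wred.xVertex i = w.keepMap (w.xVertex i) := by
  unfold xVertex
  rw [numX0, numX0, h.zNum_eq, h.posXs_eq, Finset.sort_image_of_strictMonoOn
    (strictMonoOn_keepMap.mono fun v hv => ((mem_posXs w).1 hv).isKept)]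
  split_ifs
  · rfl
  · exact List.getD_map _ 0 w.keepMap

lemma hasX_keepMap_iff {v : ℕ} (hv : w.IsKept v) : wred.HasX (w.keepMap v) ↔ w.HasX v := by
  rw [hasX_iff_of_entries_eq h.entries_eq_pairs fun _ => pos_of_mem_image_keepMap,
    ← Finset.mem_coe, Finset.coe_image,
    keepMap_injOn.mem_image_iff (fun u hu => ((mem_posXs w).1 hu).isKept) hv, Finset.mem_coe,
    mem_posXs]

lemma emptyAt_keepMap_iff {v : ℕ} (hv : w.IsKept v) :
    wred.EmptyAt (w.keepMap v) ↔ w.EmptyAt v := by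
  rcases Nat.eq_zero_or_pos v with rfl | hpos
  · exact iff_of_false (fun he => he.1.false) (fun he => he.1.false)
  · rw [emptyAt_iff_not_hasX ((keepMap_pos_iff hv).2 hpos)
      (isKept_of_entries_eq h.entries_eq_pairs (fun _ => pos_of_mem_image_keepMap) _),
      emptyAt_iff_not_hasX hpos hv, h.hasX_keepMap_iff hv]

lemma dist_eq {s t : ℕ} (ht : w.IsKept t) :
    wred.dist (w.keepMap s) (w.keepMap t) = w.dist s t := by
  rw [dist, dist,
    card_filter_Ioo_keepMap (fun _ hv => hv.isKept) (fun _ => h.emptyAt_keepMap_iff) ht,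
    card_filter_Ioo_keepMap (fun _ hv => hv.isKept) (fun _ => h.hasX_keepMap_iff) ht]

lemma len_eq (i : ℕ) {t : ℕ} (ht : w.IsKept t) : wred.len i (w.keepMap t) = w.len i t := by
  have h0 : wred.dist 0 (w.keepMap t) = w.dist 0 t := h.dist_eq (s := 0) ht
  rw [len, len, h.xVertex_eq, h.dist_eq ht, h0, numX0, numX0, barz, barz, h.zNum_eq]
  exact if_congr (keepMap_pos_iff (w.isKept_xVertex i)) rfl rfl

lemma isRightMoveDest_keepMap_iff (i : ℕ) {t : ℕ} (ht : w.IsKept t) :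
    wred.IsRightMoveDest i (w.keepMap t) ↔ w.IsRightMoveDest i t := by
  unfold IsRightMoveDest
  rw [h.emptyAt_keepMap_iff ht, h.xVertex_eq, keepMap_lt_keepMap_iff ht, h.len_eq i ht]
  refine and_congr_right fun _ => and_congr_right fun _ => and_congr_right fun _ =>
    ⟨fun hmin s hxs hst hs => ?_,
      fun hmin => (forall_iff_forall_keepMap w).2 fun s hs hxs hst he => ?_⟩
  · have hk := hs.isKept
    rw [← h.len_eq i hk]
    exact hmin _ ((keepMap_lt_keepMap_iff hk).2 hxs) ((keepMap_lt_keepMap_iff ht).2 hst)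
      ((h.emptyAt_keepMap_iff hk).2 hs)
  · rw [h.len_eq i hs]
    exact hmin s ((keepMap_lt_keepMap_iff hs).1 hxs) ((keepMap_lt_keepMap_iff ht).1 hst)
      ((h.emptyAt_keepMap_iff hs).1 he)

end IsReduction

end

section

variable {n N : ℕ}

lemma isKept_natAbs_of_mem_keptEntries {w : DomWeight n} {a : ℤ} (ha : a ∈ w.keptEntries) :
    w.IsKept a.natAbs := by
  rcases Multiset.mem_add.1 ha with ha | ha
  · rw [Multiset.eq_of_mem_replicate ha]
    exact isKept_zero
  · obtain ⟨v, hv, hav⟩ := natAbs_eq_of_mem_sum_pair ha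
    exact hav ▸ ((mem_posXs w).1 hv).isKept

lemma isKept_natAbs_of_mem_sum_pair {w : DomWeight n} {s : Finset ℕ} {f : ℕ → ℕ}
    (hf : ∀ i ∈ s, w.IsKept (f i)) {a : ℤ}
    (ha : a ∈ ∑ i ∈ s, ({(f i : ℤ), -(f i : ℤ)} : Multiset ℤ)) : w.IsKept a.natAbs := by
  obtain ⟨i, hi, hai⟩ := natAbs_eq_of_mem_sum_pair ha
  exact hai ▸ hf i hi

theorem isRightPathRes_iff_of_isReduction {l m : DomWeight n} {lred mred : DomWeight N}
    (hlm : l.SameArrows m) (hl : lred.IsReduction l) (hm : mred.IsReduction m) (θ : ℕ → Bool) :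
    m.IsRightPathRes θ l ↔ mred.IsRightPathRes θ lred := by
  have hmap : ∀ (s : Finset ℕ) (f : ℕ → ℕ),
      ∑ i ∈ s, ({(m.keepMap (f i) : ℤ), -(m.keepMap (f i) : ℤ)} : Multiset ℤ) =
        (∑ i ∈ s, ({(f i : ℤ), -(f i : ℤ)} : Multiset ℤ)).map (oddExt m.keepMap) := by
    intro s f
    simp only [Multiset.map_finsetSum, map_oddExt_pair (keepMap_zero m)]
  unfold IsRightPathRes
  rw [hm.atyp_eq, l.entries_eq_keptEntries_add_arrowEntries,
    m.entries_eq_keptEntries_add_arrowEntries, hlm.arrowEntries_eq, hl.entries_eq_map,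
    hm.entries_eq_map, hlm.keepMap_eq]
  simp only [add_right_comm _ m.arrowEntries, add_left_inj, hm.xVertex_eq]
  rw [hmap _ m.xVertex]
  constructor
  · rintro ⟨dest, hdest, heq⟩
    refine ⟨fun i => m.keepMap (dest i), fun i hi => (hm.isRightMoveDest_keepMap_iff i
      (hdest i hi).1.isKept).2 (hdest i hi), ?_⟩
    rw [hmap _ dest, ← Multiset.map_add, ← Multiset.map_add, heq]
  · rintro ⟨dest, hdest, heq⟩
    obtain ⟨dest, hkept, rfl⟩ :
        ∃ d : ℕ → ℕ, (∀ i, m.IsKept (d i)) ∧ dest = fun i => m.keepMap (d i) :=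
      ⟨fun i => m.keptVertex (dest i), fun i => m.isKept_keptVertex _,
        funext fun i => (m.keepMap_keptVertex _).symm⟩
    refine ⟨dest, fun i hi => (hm.isRightMoveDest_keepMap_iff i (hkept i)).1 (hdest i hi), ?_⟩
    rw [hmap _ dest, ← Multiset.map_add, ← Multiset.map_add] at heq
    refine Multiset.eq_of_map_eq_of_injOn
      (injOn_oddExt (keepMap_zero m) isKept_zero keepMap_injOn) (fun a ha => ?_) (fun a ha => ?_)
      heq
    · exact (Multiset.mem_add.1 ha).elim
        (fun ha => (hlm.isKept_iff _).1 (isKept_natAbs_of_mem_keptEntries ha))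
        (isKept_natAbs_of_mem_sum_pair fun i _ => m.isKept_xVertex i)
    · exact (Multiset.mem_add.1 ha).elim isKept_natAbs_of_mem_keptEntries
        (isKept_natAbs_of_mem_sum_pair fun i _ => hkept i)

end

end DomWeight

theorem stmt9_general (n r : ℕ) (l m : DomWeight n)
    (hsym : ∀ v : ℕ, 1 ≤ v → ((l.HasLt v ↔ m.HasLt v) ∧ (l.HasGt v ↔ m.HasGt v)))
    (lred mred : DomWeight (2 * r + l.barz))
    (hlred : lred.entries = Multiset.replicate l.zNum (0 : ℤ) +
      ∑ v ∈ l.posXs, ({(l.keepMap v : ℤ), -(l.keepMap v : ℤ)} : Multiset ℤ))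
    (hmred : mred.entries = Multiset.replicate m.zNum (0 : ℤ) +
      ∑ v ∈ m.posXs, ({(m.keepMap v : ℤ), -(m.keepMap v : ℤ)} : Multiset ℤ)) :
    (∀ θ : ℕ → Bool, (m.IsRightPathRes θ l ↔ mred.IsRightPathRes θ lred)) ∧
    DomWeight.aCoeff l m = DomWeight.aCoeff lred mred := by
  have hpath : ∀ θ : ℕ → Bool, m.IsRightPathRes θ l ↔ mred.IsRightPathRes θ lred :=
    DomWeight.isRightPathRes_iff_of_isReduction hsym hlred hmred
  refine ⟨hpath, ?_⟩
  rw [DomWeight.aCoeff, DomWeight.aCoeff, DomWeight.IsReduction.zNum_eq hlred,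
    DomWeight.IsReduction.zNum_eq hmred]
  exact if_congr (exists_congr hpath) rfl rfl

/-- If `λ, μ ∈ ℤⁿ₊₊` have the same atypicality `r`, the same `z̄`, and the same
`<`, `>` symbols at every vertex, and `λ_red, μ_red ∈ ℤ^{2r+z̄}₊₊` are the
reductions obtained by deleting all `<`, `>` vertices and relabelling, then for
every `θ ∈ {0,1}^r`, `λ = R_θ(μ)` iff `λ_red = R_θ(μ_red)`; consequently
`a_{λμ} = a_{λ_red μ_red}`. -/
theorem stmt9 (n r : ℕ) (l m : DomWeight n)
    (hrl : l.atyp = r) (hrm : m.atyp = r) (hz : l.barz = m.barz)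
    (hsym : ∀ v : ℕ, 1 ≤ v → ((l.HasLt v ↔ m.HasLt v) ∧ (l.HasGt v ↔ m.HasGt v)))
    (lred mred : DomWeight (2 * r + l.barz))
    (hlred : lred.entries = Multiset.replicate l.zNum (0 : ℤ) +
      ∑ v ∈ l.posXs, ({(l.keepMap v : ℤ), -(l.keepMap v : ℤ)} : Multiset ℤ))
    (hmred : mred.entries = Multiset.replicate m.zNum (0 : ℤ) +
      ∑ v ∈ m.posXs, ({(m.keepMap v : ℤ), -(m.keepMap v : ℤ)} : Multiset ℤ)) :
    (∀ θ : ℕ → Bool, (m.IsRightPathRes θ l ↔ mred.IsRightPathRes θ lred)) ∧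
    DomWeight.aCoeff l m = DomWeight.aCoeff lred mred :=
  stmt9_general n r l m hsym lred mred hlred hmred
end
end

section
/- For every λ ∈ ℤ^n_{++} and every i with 1 ≤ i ≤ #λ, there exists a unique empty vertex t > x_i of D_λ such that ℓ_λ(i,t) = 0 and ℓ_λ(i,s) < 0 for every empty vertex s with x_i < s < t; moreover t is simply the first empty vertex t > x_i with ℓ_λ(i,t) = 0 (every empty vertex strictly before it automatically has negative length). Hence the right move R_i(λ) is well defined. -/
open scoped Classical

noncomputable section

namespace DomWeight

variable {n : ℕ}

lemma empty_not_hasX (l : DomWeight n) (v : ℕ) (h : l.EmptyAt v) : ¬ l.HasX v := by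
  rintro ⟨_, h1, _⟩; exact h.2.1 h1

lemma dist_succ (l : DomWeight n) (s t : ℕ) (h : s < t) :
    l.dist s (t + 1) = l.dist s t + (if l.EmptyAt t then 1 else 0)
      - (if l.HasX t then 1 else 0) := by
  unfold dist
  have hins : Finset.Ioo s (t + 1) = insert t (Finset.Ioo s t) := by
    ext v; simp only [Finset.mem_Ioo, Finset.mem_insert]; omega
  have hnm : t ∉ Finset.Ioo s t := by simp
  rw [hins, Finset.filter_insert, Finset.filter_insert]
  by_cases he : l.EmptyAt t <;> by_cases hx : l.HasX t <;>
    simp [he, hx, Finset.card_insert_of_notMem,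
      fun p => hnm (Finset.mem_of_mem_filter t p)] <;> ring

lemma len_succ (l : DomWeight n) (i t : ℕ) (h : l.xVertex i < t) :
    l.len i (t + 1) = l.len i t + (if l.EmptyAt t then 1 else 0)
      - (if l.HasX t then 1 else 0) := by
  unfold len
  split
  · exact l.dist_succ _ t h
  · rw [l.dist_succ 0 t (by omega)]; ring

lemma le_numX0_of_xVertex_eq_zero (l : DomWeight n) (i : ℕ) (h2 : i ≤ l.atyp)
    (h : l.xVertex i = 0) : i ≤ l.numX0 := by
  by_contra hc
  push_neg at hc
  unfold xVertex at h
  rw [if_neg (by omega)] at h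
  set L := l.posXs.sort (· ≤ ·) with hL
  have hlen : L.length = l.posXs.card := Finset.length_sort _
  have hidx : i - l.numX0 - 1 < L.length := by
    unfold atyp at h2; omega
  rw [List.getD_eq_getElem L 0 hidx] at h
  have hmem : L[i - l.numX0 - 1] ∈ l.posXs := by
    rw [← Finset.mem_sort (· ≤ ·)]; exact List.getElem_mem hidx
  have hpos := (Finset.mem_filter.mp hmem).2.1
  omega

lemma crossing (l : DomWeight n) (i : ℕ) (hbase : l.len i (l.xVertex i + 1) ≤ 0) :
    ∀ t, l.xVertex i < t → 1 ≤ l.len i t →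
      ∃ s, l.xVertex i < s ∧ s < t ∧ l.EmptyAt s ∧ l.len i s = 0 := by
  intro t
  induction t with
  | zero => omega
  | succ t ih =>
    intro ht hf
    rcases Nat.lt_or_ge (l.xVertex i) t with h' | h'
    · by_cases hft : 1 ≤ l.len i t
      · obtain ⟨s, hs1, hs2, hs3, hs4⟩ := ih h' hft
        exact ⟨s, hs1, by omega, hs3, hs4⟩
      · push_neg at hft
        have hstep := l.len_succ i t h'
        by_cases he : l.EmptyAt t
        · rw [if_pos he, if_neg (l.empty_not_hasX t he)] at hstep
          exact ⟨t, h', by omega, he, by omega⟩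
        · rw [if_neg he] at hstep
          split_ifs at hstep <;> omega
    · have heq : t + 1 = l.xVertex i + 1 := by omega
      rw [heq] at hf; omega

lemma eventually_empty (l : DomWeight n) :
    ∃ N, ∀ v, N ≤ v → l.EmptyAt v := by
  refine ⟨Finset.univ.sup (fun j => (l.coeff j).natAbs) + 1, fun v hv => ?_⟩
  have hb : ∀ j, (l.coeff j).natAbs < v := by
    intro j
    have h1 : (l.coeff j).natAbs ≤ Finset.univ.sup fun j => (l.coeff j).natAbs :=
      Finset.le_sup (f := fun j => (l.coeff j).natAbs) (Finset.mem_univ j)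
    omega
  refine ⟨by omega, ?_, ?_⟩
  · rintro ⟨j, hj⟩
    have := hb j
    rw [hj, Int.natAbs_natCast] at this
    omega
  · rintro ⟨j, hj⟩
    have := hb j
    rw [hj, Int.natAbs_neg, Int.natAbs_natCast] at this
    omega

lemma exists_dest_aux (l : DomWeight n) (i : ℕ)
    (hbase : l.len i (l.xVertex i + 1) ≤ 0) :
    ∃ t, l.EmptyAt t ∧ l.xVertex i < t ∧ l.len i t = 0 := by
  obtain ⟨N, hN⟩ := l.eventually_empty
  set t0 := max (l.xVertex i + 1) N with ht0def
  have ht0 : l.xVertex i < t0 := by omega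
  have hstep : ∀ k, l.len i (t0 + k) = l.len i t0 + k := by
    intro k
    induction k with
    | zero => simp
    | succ k ih =>
      have he : l.EmptyAt (t0 + k) := hN _ (by omega)
      have hs := l.len_succ i (t0 + k) (by omega)
      rw [if_pos he, if_neg (l.empty_not_hasX _ he)] at hs
      have : t0 + (k + 1) = (t0 + k) + 1 := by omega
      rw [this, hs, ih]; push_cast; ring
  set k := (- l.len i t0).toNat with hkdef
  have hk : 0 ≤ l.len i (t0 + k) := by rw [hstep]; omega
  have hemp : l.EmptyAt (t0 + k) := hN _ (by omega)
  rcases eq_or_lt_of_le hk with h0 | h1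
  · exact ⟨t0 + k, hemp, by omega, h0.symm⟩
  · obtain ⟨s, hs1, hs2, hs3, hs4⟩ := l.crossing i hbase (t0 + k) (by omega) h1
    exact ⟨s, hs3, hs1, hs4⟩

lemma len_base (l : DomWeight n) (i : ℕ) (h2 : i ≤ l.atyp) :
    l.len i (l.xVertex i + 1) ≤ 0 := by
  have hIoo : ∀ a : ℕ, l.dist a (a + 1) = 0 := by
    intro a
    unfold dist
    have : Finset.Ioo a (a + 1) = ∅ := by ext v; simp
    rw [this]; simp
  unfold len
  split
  · rw [hIoo]
  · rename_i hx
    have hx0 : l.xVertex i = 0 := by omega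
    have hle := l.le_numX0_of_xVertex_eq_zero i h2 hx0
    rw [hx0, hIoo 0]
    have hi : (i : ℤ) ≤ (l.numX0 : ℤ) := by exact_mod_cast hle
    have hb : (0 : ℤ) ≤ (l.barz : ℤ) := Int.ofNat_nonneg _
    omega

end DomWeight

/-- For every `λ ∈ ℤⁿ₊₊` and `1 ≤ i ≤ #λ`, the destination of the right move
`R_i(λ)` exists and is unique; moreover it is simply the first empty vertex
`t > x_i` with `ℓ_λ(i,t) = 0`. Hence `R_i(λ)` is well defined. -/
theorem stmt13 (n : ℕ) (l : DomWeight n) (i : ℕ) (h1 : 1 ≤ i) (h2 : i ≤ l.atyp) :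
    (∃! t, l.IsRightMoveDest i t) ∧
    (∀ t, l.IsRightMoveDest i t ↔
      (l.EmptyAt t ∧ l.xVertex i < t ∧ l.len i t = 0 ∧
        ∀ s, l.xVertex i < s → s < t → l.EmptyAt s → l.len i s ≠ 0)) := by
  classical
  have hbase := l.len_base i h2
  have hex := l.exists_dest_aux i hbase
  set t0 := Nat.find hex with ht0def
  obtain ⟨he0, hlt0, hz0⟩ : l.EmptyAt t0 ∧ l.xVertex i < t0 ∧ l.len i t0 = 0 :=
    Nat.find_spec hex
  have hmin : ∀ m, m < t0 → ¬(l.EmptyAt m ∧ l.xVertex i < m ∧ l.len i m = 0) :=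
    fun m hm => Nat.find_min hex hm
  -- any empty s strictly between x_i and t0 has negative length
  have hneg : ∀ s, l.xVertex i < s → s < t0 → l.EmptyAt s → l.len i s < 0 := by
    intro s hs1 hs2 hse
    have hne : l.len i s ≠ 0 := fun h => hmin s hs2 ⟨hse, hs1, h⟩
    have hle : l.len i s ≤ 0 := by
      by_contra hgt
      push_neg at hgt
      obtain ⟨s', hs'1, hs'2, hs'3, hs'4⟩ := l.crossing i hbase s hs1 hgt
      exact hmin s' (by omega) ⟨hs'3, hs'1, hs'4⟩
    omega
  have hdest : l.IsRightMoveDest i t0 := ⟨he0, hlt0, hz0, hneg⟩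
  have huniq : ∀ t, l.IsRightMoveDest i t → t = t0 := by
    intro t ⟨he, hlt, hz, hall⟩
    have hge : t0 ≤ t := Nat.find_min' hex ⟨he, hlt, hz⟩
    rcases eq_or_lt_of_le hge with h | h
    · omega
    · have := hall t0 hlt0 h he0
      omega
  refine ⟨⟨t0, hdest, huniq⟩, fun t => ⟨?_, ?_⟩⟩
  · rintro ⟨he, hlt, hz, hall⟩
    exact ⟨he, hlt, hz, fun s h1 h2 h3 => by have := hall s h1 h2 h3; omega⟩
  · rintro ⟨he, hlt, hz, hall⟩
    refine ⟨he, hlt, hz, fun s h1 h2 h3 => ?_⟩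
    have hne : l.len i s ≠ 0 := hall s h1 h2 h3
    have hle : l.len i s ≤ 0 := by
      by_contra hgt
      push_neg at hgt
      obtain ⟨s', hs'1, hs'2, hs'3, hs'4⟩ := l.crossing i hbase s h1 hgt
      exact hall s' hs'1 (by omega) hs'3 hs'4
    omega
end
end

section
/- Let λ ∈ ℤ^n_{++} with #λ = r and let θ ∈ {0,1}^r. Then the destination vertices of the right moves R_i(λ), taken over all i with θ_i = 1 and computed independently in D_λ, are pairwise distinct empty vertices of D_λ; consequently deleting from D_λ the ×'s with θ_i = 1 and placing a × at each destination vertex yields the weight diagram of an integral dominant weight R_θ(λ) ∈ ℤ^n_{++}, and z(R_θ(λ)) = z(λ) − 2·#{i : θ_i = 1 and x_i = 0}. -/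
open scoped Classical

noncomputable section

/-!
Write `ℓ(i, t) = d(x_i, t) - c_i` with a shift `c_i ≥ 0`. Passing a vertex changes `ℓ(i, ·)` by
`+1` if the vertex is empty and by `0` or `-1` otherwise; hence as long as every empty vertex passed
has negative length, `ℓ(i, t) ≤ 0`. As the diagram is eventually empty, the first empty `t > x_i`
with `ℓ(i, t) ≥ 0` is the (unique) destination of `R_i`. Two destinations cannot coincide: for two
`×`'s at vertex `0` the lengths to the same `t` differ by `2(j - i)`, and if `x_i < x_j` then
`ℓ(i, t) = ℓ(j, t) = 0` forces `ℓ(i, x_j) = 1`, against the bound above. So removing the entries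
`±x_i` and adding `±t_i` keeps every nonzero entry simple; the resulting multiset is the multiset of
entries of a unique dominant weight, whose zeros are those of `λ` minus the removed pairs `0, 0`.
-/

theorem two_le_count_map_univ {n : ℕ} {α : Type*} [DecidableEq α] (f : Fin n → α) {i j : Fin n}
    (hij : i ≠ j) (hf : f i = f j) : 2 ≤ (Finset.univ.val.map f).count (f i) := by
  have hle : ({i, j} : Multiset (Fin n)) ≤ Finset.univ.val :=
    (Multiset.le_iff_subset (by simp [hij])).2 (by simp)
  calc 2 = (({i, j} : Multiset (Fin n)).map f).count (f i) := by simp [hf]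
    _ ≤ _ := Multiset.count_le_of_le _ (Multiset.map_le_map hle)

def signedPairs (S : Finset ℕ) (f : ℕ → ℕ) : Multiset ℤ :=
  ∑ i ∈ S, ({(f i : ℤ), -(f i : ℤ)} : Multiset ℤ)

section SignedPairs

variable {S : Finset ℕ} {f : ℕ → ℕ}

theorem mem_signedPairs {v : ℤ} : v ∈ signedPairs S f ↔ ∃ i ∈ S, v = f i ∨ v = -(f i : ℤ) := by
  simp [signedPairs, Multiset.mem_sum]

theorem card_signedPairs : Multiset.card (signedPairs S f) = 2 * S.card := by
  simp [signedPairs, Multiset.card_sum, mul_comm]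

theorem count_signedPairs (v : ℤ) :
    (signedPairs S f).count v
      = ∑ i ∈ S, ((if v = f i then 1 else 0) + (if v = -(f i : ℤ) then 1 else 0)) := by
  rw [signedPairs, Multiset.count_sum']
  refine Finset.sum_congr rfl fun i _ => ?_
  rw [Multiset.insert_eq_cons, Multiset.count_cons, Multiset.count_singleton]
  split_ifs <;> omega

theorem count_zero_signedPairs :
    (signedPairs S f).count 0 = 2 * (S.filter fun i => f i = 0).card := by
  rw [count_signedPairs, Finset.card_filter, Finset.mul_sum]
  refine Finset.sum_congr rfl fun i _ => ?_
  split_ifs <;> omega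

theorem count_signedPairs_le_one {v : ℤ} (hv : v ≠ 0)
    (hf : ∀ i ∈ S, ∀ j ∈ S, f i = f j → f i ≠ 0 → i = j) : (signedPairs S f).count v ≤ 1 := by
  calc (signedPairs S f).count v ≤ (S.filter fun i => f i = v.natAbs).card := by
        rw [count_signedPairs, Finset.card_filter]
        refine Finset.sum_le_sum fun i _ => ?_
        split_ifs <;> omega
    _ ≤ 1 := by
        refine Finset.card_le_one.2 fun i hi j hj => ?_
        simp only [Finset.mem_filter] at hi hj
        exact hf i hi.1 j hj.1 (hi.2.trans hj.2.symm) (by omega)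

end SignedPairs

namespace DomWeight

variable {n : ℕ}

section Entries

theorem mem_entries_s14 {l : DomWeight n} {v : ℤ} : v ∈ l.entries ↔ l.IsEntry v := by
  simp [entries, IsEntry]

theorem card_entries (l : DomWeight n) : Multiset.card l.entries = n := by
  simp [entries]

theorem count_entries_s14 (l : DomWeight n) (v : ℤ) :
    l.entries.count v = (Finset.univ.filter fun i => l.coeff i = v).card := by
  rw [entries, Multiset.count_map, Finset.card_def, Finset.filter_val]
  simp only [eq_comm]

theorem count_zero_entries (l : DomWeight n) : l.entries.count 0 = l.zNum :=
  l.count_entries_s14 0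

theorem count_entries_le_one (l : DomWeight n) {v : ℤ} (hv : v ≠ 0) :
    l.entries.count v ≤ 1 := by
  rw [count_entries_s14, Finset.card_le_one]
  intro i hi j hj
  simp only [Finset.mem_filter] at hi hj
  by_contra hij
  exact hv (hi.2 ▸ l.regular' i j hij (hi.2.trans hj.2.symm))

theorem entries_injective : Function.Injective (entries : DomWeight n → Multiset ℤ) := by
  intro m m' h
  have hsorted (l : DomWeight n) : (List.ofFn l.coeff).Pairwise (· ≥ ·) :=
    List.pairwise_ofFn.2 fun i j hij => l.antitone' i j hij.le
  have hperm : (List.ofFn m.coeff).Perm (List.ofFn m'.coeff) := by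
    rw [← Multiset.coe_eq_coe, ← Fin.univ_val_map, ← Fin.univ_val_map]
    exact h
  have hcoeff := List.ofFn_inj.1 (hperm.eq_of_pairwise' (hsorted m) (hsorted m'))
  cases m; cases m'
  congr

theorem exists_entries_eq {M : Multiset ℤ} (hcard : Multiset.card M = n)
    (hreg : ∀ v ≠ 0, M.count v ≤ 1) : ∃ m : DomWeight n, m.entries = M := by
  set L := M.sort (· ≥ ·)
  have hlen : L.length = n := by rw [Multiset.length_sort, hcard]
  let coeff : Fin n → ℤ := fun i => L.get (i.cast hlen.symm)
  have hmap : Finset.univ.val.map coeff = M := by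
    rw [Fin.univ_val_map, ← M.sort_eq (· ≥ ·)]
    congr 1
    exact List.ext_get (by simp [hcard]) fun k _ _ => by simp [coeff]; rfl
  refine ⟨⟨coeff, fun i j hij => ?_, fun i j hij hcoeff => ?_⟩, hmap⟩
  · exact (M.pairwise_sort (· ≥ ·)).rel_get_of_le (by simpa using hij)
  · by_contra hv
    have := two_le_count_map_univ coeff hij hcoeff
    rw [hmap] at this
    exact absurd (hreg _ hv) (by omega)

end Entries

section Vertices

variable {l : DomWeight n} {i j : ℕ}

theorem xVertex_of_le (h : i ≤ l.numX0) : l.xVertex i = 0 := if_pos h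

theorem xVertex_eq_getElem (h1 : l.numX0 < i) (h2 : i ≤ l.atyp) :
    ∃ hk : i - l.numX0 - 1 < (l.posXs.sort (· ≤ ·)).length,
      l.xVertex i = (l.posXs.sort (· ≤ ·))[i - l.numX0 - 1] := by
  have hk : i - l.numX0 - 1 < (l.posXs.sort (· ≤ ·)).length := by
    rw [Finset.length_sort]; unfold atyp at h2; omega
  exact ⟨hk, by rw [xVertex, if_neg (by omega), List.getD_eq_getElem _ 0 hk]⟩

theorem hasX_xVertex (h1 : l.numX0 < i) (h2 : i ≤ l.atyp) : l.HasX (l.xVertex i) := by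
  obtain ⟨hk, hx⟩ := xVertex_eq_getElem h1 h2
  rw [hx]
  exact (Finset.mem_filter.1 ((Finset.mem_sort _).1 (List.getElem_mem hk))).2

theorem xVertex_eq_zero_iff (h : i ≤ l.atyp) : l.xVertex i = 0 ↔ i ≤ l.numX0 := by
  refine ⟨fun hx => ?_, xVertex_of_le⟩
  by_contra hi
  exact (hasX_xVertex (not_le.1 hi) h).1.ne' hx

theorem numX0_lt_of_xVertex_ne_zero (h : i ≤ l.atyp) (h0 : l.xVertex i ≠ 0) : l.numX0 < i :=
  not_le.1 (mt (xVertex_eq_zero_iff h).2 h0)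

theorem xVertex_lt_xVertex (hij : i < j) (hj1 : l.numX0 < j) (hj2 : j ≤ l.atyp) :
    l.xVertex i < l.xVertex j := by
  by_cases hi : i ≤ l.numX0
  · rw [xVertex_of_le hi]
    exact (hasX_xVertex hj1 hj2).1
  obtain ⟨hki, hxi⟩ := xVertex_eq_getElem (not_le.1 hi) (hij.le.trans hj2)
  obtain ⟨hkj, hxj⟩ := xVertex_eq_getElem hj1 hj2
  rw [hxi, hxj]
  exact (Finset.sortedLT_sort l.posXs).strictMono_get (a := ⟨_, hki⟩) (b := ⟨_, hkj⟩)
    (by simp only [Fin.mk_lt_mk]; omega)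

theorem eq_of_xVertex_eq (hi : i ≤ l.atyp) (hj : j ≤ l.atyp) (h : l.xVertex i = l.xVertex j)
    (h0 : l.xVertex i ≠ 0) : i = j := by
  rcases lt_trichotomy i j with hij | hij | hij
  · exact absurd h (xVertex_lt_xVertex hij (numX0_lt_of_xVertex_ne_zero hj (h ▸ h0)) hj).ne
  · exact hij
  · exact absurd h (xVertex_lt_xVertex hij (numX0_lt_of_xVertex_ne_zero hi h0) hi).ne'

end Vertices

section Length

variable {l : DomWeight n}

def distWeight (l : DomWeight n) (v : ℕ) : ℤ :=
  (if l.EmptyAt v then 1 else 0) - (if l.HasX v then 1 else 0)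

theorem not_hasX_of_emptyAt {v : ℕ} (h : l.EmptyAt v) : ¬ l.HasX v := fun hx => h.2.1 hx.2.1

theorem distWeight_of_emptyAt {v : ℕ} (h : l.EmptyAt v) : l.distWeight v = 1 := by
  simp [distWeight, h, not_hasX_of_emptyAt h]

theorem distWeight_of_hasX {v : ℕ} (h : l.HasX v) : l.distWeight v = -1 := by
  have : ¬ l.EmptyAt v := fun he => not_hasX_of_emptyAt he h
  simp [distWeight, h, this]

theorem distWeight_le_zero_of_not_emptyAt {v : ℕ} (h : ¬ l.EmptyAt v) : l.distWeight v ≤ 0 := by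
  unfold distWeight
  split_ifs <;> omega

theorem dist_eq_sum (a b : ℕ) : l.dist a b = ∑ v ∈ Finset.Ico (a + 1) b, l.distWeight v := by
  have hIoo : Finset.Ioo a b = Finset.Ico (a + 1) b := by
    ext; simp only [Finset.mem_Ioo, Finset.mem_Ico]; omega
  simp only [dist, distWeight, Finset.sum_sub_distrib, Finset.card_filter, hIoo]
  push_cast
  rfl

theorem dist_succ_self (a : ℕ) : l.dist a (a + 1) = 0 := by
  simp [dist_eq_sum]

theorem dist_succ_s14 {a t : ℕ} (h : a < t) : l.dist a (t + 1) = l.dist a t + l.distWeight t := by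
  rw [dist_eq_sum, dist_eq_sum, Finset.sum_Ico_succ_top h]

theorem dist_split (l : DomWeight n) {a b c : ℕ} (h1 : a < b) (h2 : b < c) :
    l.dist a c = l.dist a b + l.distWeight b + l.dist b c := by
  rw [← dist_succ_s14 h1, dist_eq_sum, dist_eq_sum, dist_eq_sum,
    Finset.sum_Ico_consecutive _ (by omega) h2]

def lenShift (l : DomWeight n) (i : ℕ) : ℤ :=
  if 0 < l.xVertex i then 0 else 2 * ((l.numX0 : ℤ) - i) + l.barz

theorem len_eq_dist_sub_lenShift (i t : ℕ) :
    l.len i t = l.dist (l.xVertex i) t - l.lenShift i := by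
  unfold len lenShift
  split_ifs with h
  · ring
  · rw [Nat.eq_zero_of_not_pos h]
    ring

theorem lenShift_nonneg {i : ℕ} (h : i ≤ l.atyp) : 0 ≤ l.lenShift i := by
  unfold lenShift
  split_ifs with hx
  · rfl
  · have := (xVertex_eq_zero_iff h).1 (Nat.eq_zero_of_not_pos hx)
    omega

theorem len_succ_s14 {i t : ℕ} (h : l.xVertex i < t) :
    l.len i (t + 1) = l.len i t + l.distWeight t := by
  rw [len_eq_dist_sub_lenShift, len_eq_dist_sub_lenShift, dist_succ_s14 h]
  ring

theorem len_le_zero_of_forall_emptyAt_len_neg {i v : ℕ} (hi : i ≤ l.atyp)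
    (hv : l.xVertex i < v)
    (hneg : ∀ s, l.xVertex i < s → s < v → l.EmptyAt s → l.len i s < 0) :
    l.len i v ≤ 0 := by
  induction v, hv using Nat.le_induction with
  | base =>
    rw [len_eq_dist_sub_lenShift, dist_succ_self]
    linarith [lenShift_nonneg hi]
  | succ v hv ih =>
    have ih := ih fun s h1 h2 => hneg s h1 (by omega)
    rw [len_succ_s14 hv]
    by_cases he : l.EmptyAt v
    · rw [distWeight_of_emptyAt he]
      linarith [hneg v hv (by omega) he]
    · linarith [distWeight_le_zero_of_not_emptyAt he]

end Length

section RightMoves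

variable {l : DomWeight n} {i j t : ℕ}

theorem IsRightMoveDest.unique {t' : ℕ} (h : l.IsRightMoveDest i t)
    (h' : l.IsRightMoveDest i t') : t = t' := by
  rcases lt_trichotomy t t' with hlt | heq | hgt
  · exact absurd h.2.2.1 (h'.2.2.2 t h.2.1 hlt h.1).ne
  · exact heq
  · exact absurd h'.2.2.1 (h.2.2.2 t' h'.2.1 hgt h'.1).ne

theorem exists_forall_ge_emptyAt (l : DomWeight n) : ∃ N, ∀ v ≥ N, l.EmptyAt v := by
  refine ⟨(Finset.univ.sup fun k => (l.coeff k).natAbs) + 1, fun v hv => ?_⟩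
  have hbound (k : Fin n) : (l.coeff k).natAbs < v :=
    lt_of_le_of_lt (Finset.le_sup (f := fun k => (l.coeff k).natAbs) (Finset.mem_univ k)) hv
  refine ⟨by omega, ?_, ?_⟩ <;> rintro ⟨k, hk⟩ <;> have := hbound k <;> omega

theorem exists_emptyAt_len_nonneg (l : DomWeight n) (i : ℕ) :
    ∃ t, l.xVertex i < t ∧ l.EmptyAt t ∧ 0 ≤ l.len i t := by
  obtain ⟨N, hN⟩ := l.exists_forall_ge_emptyAt
  set B := max N (l.xVertex i + 1)
  have hlen (k : ℕ) : l.len i (B + k) = l.len i B + k := by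
    induction k with
    | zero => simp
    | succ k ih =>
      rw [← add_assoc, len_succ_s14 (by omega), ih, distWeight_of_emptyAt (hN _ (by omega))]
      push_cast
      ring
  refine ⟨B + (-l.len i B).toNat, by omega, hN _ (by omega), ?_⟩
  rw [hlen]
  omega

theorem exists_isRightMoveDest (hi : i ≤ l.atyp) : ∃ t, l.IsRightMoveDest i t := by
  have hex := l.exists_emptyAt_len_nonneg i
  obtain ⟨hxt, hemp, hnonneg⟩ := Nat.find_spec hex
  have hneg : ∀ s, l.xVertex i < s → s < Nat.find hex → l.EmptyAt s → l.len i s < 0 :=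
    fun s h1 h2 h3 => not_le.1 fun h => Nat.find_min hex h2 ⟨h1, h3, h⟩
  exact ⟨Nat.find hex, hemp, hxt,
    le_antisymm (len_le_zero_of_forall_emptyAt_len_neg hi hxt hneg) hnonneg, hneg⟩

theorem not_isRightMoveDest_of_lt (hij : i < j) (hj : j ≤ l.atyp)
    (hdi : l.IsRightMoveDest i t) : ¬ l.IsRightMoveDest j t := by
  intro hdj
  have hli := hdi.2.2.1
  have hlj := hdj.2.2.1
  rw [len_eq_dist_sub_lenShift] at hli hlj
  by_cases hxj : l.xVertex j = 0
  · have hjn := (xVertex_eq_zero_iff hj).1 hxj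
    have hxi := xVertex_of_le (l := l) (i := i) (by omega)
    simp only [lenShift, hxi, hxj, lt_irrefl, if_false] at hli hlj
    omega
  have hjn := numX0_lt_of_xVertex_ne_zero hj hxj
  have hX := hasX_xVertex hjn hj
  have hxij := xVertex_lt_xVertex hij hjn hj
  have hsplit := l.dist_split hxij hdj.2.1
  have hweight := distWeight_of_hasX hX
  have hshift : l.lenShift j = 0 := if_pos hX.1
  have hle := len_le_zero_of_forall_emptyAt_len_neg (hij.le.trans hj) hxij
    fun s h1 h2 => hdi.2.2.2 s h1 (h2.trans hdj.2.1)
  rw [len_eq_dist_sub_lenShift] at hle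
  omega

theorem eq_of_isRightMoveDest (hi : i ≤ l.atyp) (hj : j ≤ l.atyp)
    (hdi : l.IsRightMoveDest i t) (hdj : l.IsRightMoveDest j t) : i = j := by
  rcases lt_trichotomy i j with hij | hij | hij
  · exact absurd hdj (not_isRightMoveDest_of_lt hij hj hdi)
  · exact hij
  · exact absurd hdi (not_isRightMoveDest_of_lt hij hi hdj)

end RightMoves

section RightPath

variable {l : DomWeight n} {S : Finset ℕ} {dest : ℕ → ℕ}

theorem signedPairs_xVertex_le_entries (hS : S ⊆ Finset.Icc 1 l.atyp) :
    signedPairs S l.xVertex ≤ l.entries := by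
  have hSat : ∀ i ∈ S, i ≤ l.atyp := fun i hi => (Finset.mem_Icc.1 (hS hi)).2
  rw [Multiset.le_iff_count]
  intro v
  rcases eq_or_ne v 0 with rfl | hv
  · have hsub : S.filter (fun i => l.xVertex i = 0) ⊆ Finset.Icc 1 l.numX0 := by
      intro i hi
      rw [Finset.mem_filter] at hi
      have hi' := Finset.mem_Icc.1 (hS hi.1)
      exact Finset.mem_Icc.2 ⟨hi'.1, (xVertex_eq_zero_iff hi'.2).1 hi.2⟩
    have hcard := Finset.card_le_card hsub
    rw [count_zero_signedPairs, count_zero_entries]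
    rw [Nat.card_Icc, numX0] at hcard
    omega
  have hle := count_signedPairs_le_one hv fun i hi j hj hx hx0 =>
    eq_of_xVertex_eq (hSat i hi) (hSat j hj) hx hx0
  rcases Nat.eq_zero_or_pos ((signedPairs S l.xVertex).count v) with h0 | hpos
  · omega
  obtain ⟨i, hi, hvi⟩ := mem_signedPairs.1 (Multiset.count_pos.1 hpos)
  have hx0 : l.xVertex i ≠ 0 := fun hx => by rw [hx] at hvi; omega
  have hX := hasX_xVertex (numX0_lt_of_xVertex_ne_zero (hSat i hi) hx0) (hSat i hi)
  have hmem : v ∈ l.entries := mem_entries_s14.2 (by rcases hvi with rfl | rfl; exacts [hX.2.1, hX.2.2])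
  have := Multiset.count_pos.2 hmem
  omega

theorem notMem_entries_of_mem_signedPairs (hdest : ∀ i ∈ S, l.EmptyAt (dest i)) {v : ℤ}
    (hv : v ∈ signedPairs S dest) : v ∉ l.entries := by
  obtain ⟨i, hi, hvi⟩ := mem_signedPairs.1 hv
  rw [mem_entries_s14]
  rcases hvi with rfl | rfl
  exacts [(hdest i hi).2.1, (hdest i hi).2.2]

theorem exists_entries_add_signedPairs_eq (hS : S ⊆ Finset.Icc 1 l.atyp)
    (hdest : ∀ i ∈ S, l.IsRightMoveDest i (dest i)) :
    ∃ m : DomWeight n, m.entries + signedPairs S l.xVertex = l.entries + signedPairs S dest := by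
  have hSat : ∀ i ∈ S, i ≤ l.atyp := fun i hi => (Finset.mem_Icc.1 (hS hi)).2
  have hR := signedPairs_xVertex_le_entries hS
  have hM : l.entries - signedPairs S l.xVertex + signedPairs S dest + signedPairs S l.xVertex
      = l.entries + signedPairs S dest := by
    rw [add_right_comm, tsub_add_cancel_of_le hR]
  suffices ∃ m : DomWeight n, m.entries = l.entries - signedPairs S l.xVertex + signedPairs S dest by
    obtain ⟨m, hm⟩ := this
    exact ⟨m, hm ▸ hM⟩
  refine exists_entries_eq ?_ fun v hv => ?_
  · have := Multiset.card_le_card hR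
    rw [Multiset.card_add, Multiset.card_sub hR, card_signedPairs, card_signedPairs,
      card_entries] at *
    omega
  have hcount := congrArg (Multiset.count v) hM
  simp only [Multiset.count_add] at hcount
  have hA := count_signedPairs_le_one (S := S) (f := dest) hv fun i hi j hj hd _ =>
    eq_of_isRightMoveDest (hSat i hi) (hSat j hj) (hdest i hi) (hd ▸ hdest j hj)
  have hdisj : 0 < (signedPairs S dest).count v → l.entries.count v = 0 := fun hpos =>
    Multiset.count_eq_zero.2 <| notMem_entries_of_mem_signedPairs (fun i hi => (hdest i hi).1)
      (Multiset.count_pos.1 hpos)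
  have := l.count_entries_le_one hv
  rw [Multiset.count_add]
  omega

theorem zNum_eq_of_entries_add_signedPairs_eq {m : DomWeight n} (hdest : ∀ i ∈ S, 0 < dest i)
    (h : m.entries + signedPairs S l.xVertex = l.entries + signedPairs S dest) :
    m.zNum = l.zNum - 2 * (S.filter fun i => l.xVertex i = 0).card := by
  have h0 := congrArg (Multiset.count 0) h
  have hA : S.filter (fun i => dest i = 0) = ∅ :=
    Finset.filter_eq_empty_iff.2 fun i hi => (hdest i hi).ne'
  rw [Multiset.count_add, Multiset.count_add, count_zero_signedPairs, count_zero_signedPairs, hA,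
    count_zero_entries, count_zero_entries, Finset.card_empty] at h0
  omega

end RightPath

end DomWeight

/-- For `λ ∈ ℤⁿ₊₊` and `θ ∈ {0,1}^{#λ}`: the destinations of the right moves
`R_i(λ)`, `θ_i = 1` (computed independently in `D_λ`), are pairwise distinct;
consequently `R_θ(λ)` is a well-defined integral dominant weight, and
`z(R_θ(λ)) = z(λ) − 2·#{i : θ_i = 1, x_i = 0}`. -/
theorem stmt14 (n : ℕ) (l : DomWeight n) (θ : ℕ → Bool) :
    (∀ dest : ℕ → ℕ, (∀ i ∈ selected l.atyp θ, l.IsRightMoveDest i (dest i)) →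
      ∀ i ∈ selected l.atyp θ, ∀ j ∈ selected l.atyp θ, i ≠ j → dest i ≠ dest j) ∧
    (∃! m : DomWeight n, l.IsRightPathRes θ m) ∧
    (∀ m : DomWeight n, l.IsRightPathRes θ m →
      m.zNum = l.zNum - 2 * ((selected l.atyp θ).filter fun i => l.xVertex i = 0).card) := by
  set S := selected l.atyp θ
  have hS : S ⊆ Finset.Icc 1 l.atyp := Finset.filter_subset _ _
  have hSat : ∀ i ∈ S, i ≤ l.atyp := fun i hi => (Finset.mem_Icc.1 (hS hi)).2
  refine ⟨fun dest hdest i hi j hj hij hd => hij <|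
    l.eq_of_isRightMoveDest (hSat i hi) (hSat j hj) (hdest i hi) (hd ▸ hdest j hj), ?_, ?_⟩
  · choose! dest hdest using fun i hi => l.exists_isRightMoveDest (hSat i hi)
    obtain ⟨m, hm⟩ := l.exists_entries_add_signedPairs_eq hS hdest
    refine ⟨m, ⟨dest, hdest, hm⟩, ?_⟩
    rintro m' ⟨dest', hdest', hm'⟩
    have hsame : signedPairs S dest' = signedPairs S dest :=
      Finset.sum_congr rfl fun i hi => by rw [(hdest' i hi).unique (hdest i hi)]
    refine DomWeight.entries_injective (add_right_cancel (b := signedPairs S l.xVertex) ?_)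
    rw [hm, ← hsame]
    exact hm'
  · rintro m ⟨dest, hdest, hm⟩
    exact l.zNum_eq_of_entries_add_signedPairs_eq (fun i hi => (hdest i hi).1.1) hm
end
end
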